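/- Let F denote the Fibonacci sequence with F(0) = 0, F(1) = 1, and let α = (α_i)_{i≥0} be the sequence α_i = F(i). Then for every integer n ≥ 2, the generalized symmetric Pascal triangle satisfies det(P_{α,α}(n)) = -2^{n-2}. -/

import Mathlib

open Matrix

/-- Entry `P_{i,j}` of the generalized Pascal triangle associated to sequences `α`, `β`:
`P_{i,0} = α i`, `P_{0,j} = β j`, and `P_{i,j} = P_{i-1,j} + P_{i,j-1}` for `i, j ≥ 1`. -/
def pascalEntry {R : Type*} [CommRing R] (α β : ℕ → R) : ℕ → ℕ → R
  | i, 0 => α i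
  | 0, j + 1 => β (j + 1)
  | i + 1, j + 1 => pascalEntry α β i (j + 1) + pascalEntry α β (i + 1) j

/-- The generalized Pascal triangle `P_{α,β}(n)`. -/
def genPascal {R : Type*} [CommRing R] (α β : ℕ → R) (n : ℕ) :
    Matrix (Fin n) (Fin n) R :=
  Matrix.of fun i j => pascalEntry α β (i : ℕ) (j : ℕ)

/-- The Töplitz matrix `T_{α,β}(n)`: `t_{i,j} = α_{i-j}` if `i ≥ j`, else `β_{j-i}`. -/
def toeplitz {R : Type*} [CommRing R] (α β : ℕ → R) (n : ℕ) :
    Matrix (Fin n) (Fin n) R :=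
  Matrix.of fun i j => if (j : ℕ) ≤ (i : ℕ) then α ((i : ℕ) - (j : ℕ)) else β ((j : ℕ) - (i : ℕ))

/-- The unipotent lower triangular matrix `L(n)` with `L_{i,j} = C(i,j)` for `i ≥ j`. -/
def lowerL (R : Type*) [CommRing R] (n : ℕ) : Matrix (Fin n) (Fin n) R :=
  Matrix.of fun i j => if (j : ℕ) ≤ (i : ℕ) then ((i : ℕ).choose (j : ℕ) : R) else 0

/-- The binomial inverse transform `α̂_i = ∑_{k=0}^{i} (-1)^{i+k} C(i,k) α_k`. -/
def hatSeq {R : Type*} [CommRing R] (α : ℕ → R) (i : ℕ) : R :=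
  ∑ k ∈ Finset.range (i + 1), (-1 : R) ^ (i + k) * (i.choose k : R) * α k

/-- The binomial transform `α̌_i = ∑_{k=0}^{i} C(i,k) α_k`. -/
def checkSeq {R : Type*} [CommRing R] (α : ℕ → R) (i : ℕ) : R :=
  ∑ k ∈ Finset.range (i + 1), (i.choose k : R) * α k

/-! If `α = checkSeq a` and `β = checkSeq b`, then `L(n) T_{a,b}(n) L(n)ᵀ` satisfies the Pascal
recurrence, because `T_{a,b}` is constant along diagonals and `L` encodes Pascal's rule; so
`P_{α,β}(n) = L(n) T_{a,b}(n) L(n)ᵀ` and `det P_{α,β}(n) = det T_{a,b}(n)`. The Fibonacci numbers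
are the binomial transform of the negaFibonacci numbers `F(-k) = (-1)^(k+1) F(k)`, since `1 + x`
solves `y² = y + 1` whenever `x` solves `x² = 1 - x`. In `T(n)_{ij} = F(-|i-j|)` the row
operation `R_{n-1} + R_{n-2} - R_{n-3}` turns the last row into `(0, …, 0, 2)`, so
`det T(n) = 2 det T(n-1)`, and `det T(2) = -1`. -/

open Finset

section PascalToeplitz

variable {R : Type*} [CommRing R]

theorem checkSeq_zero (a : ℕ → R) : checkSeq a 0 = a 0 := by
  simp [checkSeq]

theorem checkSeq_add (a b : ℕ → R) (i : ℕ) :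
    checkSeq (fun k => a k + b k) i = checkSeq a i + checkSeq b i := by
  simp only [checkSeq, mul_add, sum_add_distrib]

theorem checkSeq_succ (a : ℕ → R) (i : ℕ) :
    checkSeq a (i + 1) = checkSeq (fun k => a k + a (k + 1)) i := by
  have h := sum_range_succ' (fun k => (i.choose k : R) * a k) (i + 1)
  rw [sum_range_succ, Nat.choose_succ_self, Nat.cast_zero, zero_mul, add_zero] at h
  simp only [checkSeq, mul_add, sum_add_distrib]
  rw [sum_range_succ', h]
  simp only [Nat.choose_succ_succ', Nat.cast_add, add_mul, sum_add_distrib,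
    Nat.choose_zero_right]
  ring

theorem eq_pascalEntry (α β : ℕ → R) (f : ℕ → ℕ → R) (h_left : ∀ i, f i 0 = α i)
    (h_top : ∀ j, f 0 (j + 1) = β (j + 1))
    (h_rec : ∀ i j, f (i + 1) (j + 1) = f i (j + 1) + f (i + 1) j) (i j : ℕ) :
    f i j = pascalEntry α β i j := by
  induction i, j using pascalEntry.induct with
  | case1 i => rw [h_left, pascalEntry]
  | case2 j => rw [h_top, pascalEntry]
  | case3 i j ih₁ ih₂ => rw [h_rec, ih₁, ih₂, pascalEntry]

theorem lowerL_apply {n : ℕ} (i j : Fin n) : lowerL R n i j = ((i : ℕ).choose j : R) := by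
  rw [lowerL, Matrix.of_apply, ite_eq_left_iff, not_le]
  intro h
  rw [Nat.choose_eq_zero_of_lt h, Nat.cast_zero]

theorem det_lowerL (n : ℕ) : (lowerL R n).det = 1 := by
  rw [Matrix.det_of_isLowerTriangular]
  · simp [lowerL_apply]
  · intro i j hij
    rw [lowerL_apply, Nat.choose_eq_zero_of_lt (show (i : ℕ) < j from hij), Nat.cast_zero]

theorem sum_fin_choose_mul {n : ℕ} (i : Fin n) (f : ℕ → R) :
    ∑ k : Fin n, ((i : ℕ).choose k : R) * f k = checkSeq f i := by
  rw [Fin.sum_univ_eq_sum_range (fun k => ((i : ℕ).choose k : R) * f k), checkSeq]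
  refine (sum_subset (range_subset_range.2 i.isLt) fun k _ hk => ?_).symm
  rw [mem_range, not_lt] at hk
  rw [Nat.choose_eq_zero_of_lt hk, Nat.cast_zero, zero_mul]

theorem lowerL_mul_mul_transpose_apply {n : ℕ} (t : ℕ → ℕ → R) (i j : Fin n) :
    (lowerL R n * Matrix.of (fun k l : Fin n => t k l) * (lowerL R n)ᵀ) i j =
      checkSeq (fun k => checkSeq (t k) j) i := by
  rw [Matrix.mul_assoc]
  simp only [Matrix.mul_apply, Matrix.of_apply, Matrix.transpose_apply, lowerL_apply]
  rw [← sum_fin_choose_mul]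
  refine sum_congr rfl fun k _ => ?_
  rw [← sum_fin_choose_mul]
  simp only [mul_comm]

theorem genPascal_checkSeq (a b : ℕ → R) (h₀ : a 0 = b 0) (n : ℕ) :
    genPascal (checkSeq a) (checkSeq b) n = lowerL R n * toeplitz a b n * (lowerL R n)ᵀ := by
  set t : ℕ → ℕ → R := fun k l => if l ≤ k then a (k - l) else b (l - k)
  have t_succ_succ (k l : ℕ) : t (k + 1) (l + 1) = t k l := by simp [t]
  ext i j
  rw [show toeplitz a b n = Matrix.of fun k l : Fin n => t k l from rfl,
    lowerL_mul_mul_transpose_apply, genPascal, Matrix.of_apply]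
  refine (eq_pascalEntry _ _ (fun i j => checkSeq (fun k => checkSeq (t k) j) i)
    (fun i => ?_) (fun j => ?_) (fun i j => ?_) i j).symm
  · simp [checkSeq_zero, t]
  · rw [checkSeq_zero]
    congr 1
    ext l
    rcases l with _ | l <;> simp [t, h₀]
  · rw [checkSeq_succ _ i, checkSeq_succ _ i, ← checkSeq_add]
    congr 1
    ext k
    rw [checkSeq_succ (t (k + 1)), checkSeq_add]
    simp only [t_succ_succ]
    ring

theorem det_genPascal_checkSeq (a b : ℕ → R) (h₀ : a 0 = b 0) (n : ℕ) :
    (genPascal (checkSeq a) (checkSeq b) n).det = (toeplitz a b n).det := by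
  rw [genPascal_checkSeq a b h₀, Matrix.det_mul, Matrix.det_mul, Matrix.det_transpose,
    det_lowerL, one_mul, mul_one]

theorem toeplitz_submatrix_castSucc (a b : ℕ → R) (n : ℕ) :
    (toeplitz a b (n + 1)).submatrix Fin.castSucc Fin.castSucc = toeplitz a b n :=
  rfl

end PascalToeplitz

def negaFib (k : ℕ) : ℤ := (-1) ^ (k + 1) * Nat.fib k

theorem negaFib_add_two (k : ℕ) : negaFib (k + 2) = negaFib k - negaFib (k + 1) := by
  simp only [negaFib, Nat.fib_add_two, Nat.cast_add, pow_succ]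
  ring

theorem checkSeq_negaFib_add_two (i : ℕ) :
    checkSeq negaFib (i + 2) = checkSeq negaFib (i + 1) + checkSeq negaFib i := by
  rw [checkSeq_succ, checkSeq_succ, checkSeq_succ, ← checkSeq_add]
  congr 1
  ext k
  rw [negaFib_add_two]
  ring

theorem checkSeq_negaFib (i : ℕ) : checkSeq negaFib i = Nat.fib i := by
  induction i using Nat.twoStepInduction with
  | zero => simp [checkSeq, negaFib]
  | one => simp [checkSeq, negaFib, sum_range_succ]
  | more i ih₀ ih₁ =>
    rw [checkSeq_negaFib_add_two, ih₀, ih₁, Nat.fib_add_two, Nat.cast_add, add_comm]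

theorem det_toeplitz_negaFib_succ (m : ℕ) :
    (toeplitz negaFib negaFib (m + 3)).det = 2 * (toeplitz negaFib negaFib (m + 2)).det := by
  set T := toeplitz negaFib negaFib (m + 3)
  set p : Fin (m + 3) := ⟨m + 1, by omega⟩
  set q : Fin (m + 3) := ⟨m, by omega⟩
  have last_row :
      T (Fin.last _) + (1 : ℤ) • T p + (-1 : ℤ) • T q = Pi.single (Fin.last _) 2 := by
    ext ⟨j, hj⟩
    simp only [T, p, q, toeplitz, Pi.add_apply, Pi.smul_apply, smul_eq_mul, Pi.single_apply,
      Fin.ext_iff, Matrix.of_apply, Fin.val_last]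
    rcases Nat.lt_or_ge j (m + 1) with h | h
    · obtain ⟨k, rfl⟩ := Nat.exists_eq_add_of_le (Nat.lt_succ_iff.mp h)
      rw [if_pos (by omega), if_pos (by omega), if_pos (by omega), if_neg (by omega),
        show j + k + 2 - j = k + 2 by omega, show j + k + 1 - j = k + 1 by omega,
        Nat.add_sub_cancel_left, negaFib_add_two]
      ring
    · obtain rfl | rfl : j = m + 1 ∨ j = m + 2 := by omega
      all_goals simp [negaFib]
  have row_op : T.det = (T.updateRow (Fin.last _) (Pi.single (Fin.last _) 2)).det := by
    have hp : Fin.last _ ≠ p := by simp [p, Fin.ext_iff]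
    have hq : Fin.last _ ≠ q := by simp [q, Fin.ext_iff]
    rw [← last_row, ← det_updateRow_add_smul_self T hp 1,
      ← det_updateRow_add_smul_self _ hq (-1), Matrix.updateRow_self,
      Matrix.updateRow_ne hq.symm, Matrix.updateRow_idem]
  have minor : (T.updateRow (Fin.last _) (Pi.single (Fin.last _) 2)).submatrix Fin.castSucc
      Fin.castSucc = toeplitz negaFib negaFib (m + 2) := by
    rw [← toeplitz_submatrix_castSucc]
    simpa using Matrix.submatrix_updateRow_succAbove T _ Fin.castSucc (Fin.last _)
  rw [row_op, Matrix.det_succ_row _ (Fin.last _), sum_eq_single (Fin.last _)]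
  · simp [minor]
  · intro j _ hj
    simp [hj]
  · simp

theorem det_toeplitz_negaFib (m : ℕ) : (toeplitz negaFib negaFib (m + 2)).det = -2 ^ m := by
  induction m with
  | zero => simp [Matrix.det_fin_two, toeplitz, negaFib]
  | succ m ih => rw [det_toeplitz_negaFib_succ, ih, pow_succ]; ring

/-- for the Fibonacci sequence `α_i = F(i)`, the generalized symmetric
Pascal triangle satisfies `det(P_{α,α}(n)) = -2^{n-2}` for `n ≥ 2`. -/
theorem det_genPascal_symmetric_fib (n : ℕ) (hn : 2 ≤ n) :
    (genPascal (fun i => (Nat.fib i : ℤ)) (fun i => (Nat.fib i : ℤ)) n).det =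
      -2 ^ (n - 2) := by
  obtain ⟨m, rfl⟩ := Nat.exists_eq_add_of_le' hn
  have h := det_genPascal_checkSeq negaFib negaFib rfl (m + 2)
  rw [show checkSeq negaFib = fun i => (Nat.fib i : ℤ) from funext checkSeq_negaFib] at h
  rw [h, det_toeplitz_negaFib, Nat.add_sub_cancel]
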